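/- arXiv:1809.03585 — 3 statements merged into one kernel-verified Lean document; each statement's English description precedes it below -/
import Mathlib

section
/- Let β ∈ (0,1) and γ ∈ (1, (1−β)^{−1}). There exists a constant C, depending only on β and γ, with the following property: for every a > 0, every s ≥ 1, and every nonnegative measurable function h : ℝ → [0,∞) such that for all t ∈ [1,s] one has ∫_t^s h(r) dr ≤ ( a^{β−1} + (1−β)·t )^{−1/(1−β)}, it holds that ∫_1^s r^{γ} h(r) dr ≤ C · a^{1 − γ(1−β)}. -/
open MeasureTheory ENNReal

private lemma pow_rpow_swap {x : ℝ} (hx : 0 ≤ x) (e : ℝ) (n : ℕ) :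
    ((x:ℝ)^n) ^ e = (x ^ e) ^ n := by
  rw [← Real.rpow_natCast x n, ← Real.rpow_natCast (x ^ e) n,
    ← Real.rpow_mul hx, ← Real.rpow_mul hx, mul_comm]

noncomputable def tk (β γ a : ℝ) (k : ℕ) : ℝ :=
  ((2:ℝ)^(k+1)) ^ γ * min a ((1-β) ^ (-(1-β)⁻¹) * ((2:ℝ)^k) ^ (-(1-β)⁻¹))

private lemma aux_sum (β γ : ℝ) (hβ : β ∈ Set.Ioo (0 : ℝ) 1)
    (hγ : γ ∈ Set.Ioo (1 : ℝ) (1 - β)⁻¹) :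
    ∃ C > 0, ∀ a : ℝ, 0 < a →
      Summable (tk β γ a) ∧ ∑' k, tk β γ a k ≤ C * a ^ (1 - γ * (1 - β)) := by
  obtain ⟨hβ0, hβ1⟩ := hβ
  obtain ⟨hγ1, hγδ⟩ := hγ
  have h1β : (0:ℝ) < 1 - β := by linarith
  set δ : ℝ := (1-β)⁻¹ with hδdef
  have hδ0 : 0 < δ := inv_pos.2 h1β
  have hδβ : (1-β) * δ = 1 := mul_inv_cancel₀ h1β.ne'
  have hγ0 : (0:ℝ) < γ := by linarith
  set c : ℝ := (1-β) ^ (-δ) with hcdef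
  have hc : 0 < c := Real.rpow_pos_of_pos h1β _
  set q : ℝ := (2:ℝ) ^ (γ - δ) with hqdef
  have hq0 : 0 < q := Real.rpow_pos_of_pos two_pos _
  have hq1 : q < 1 := Real.rpow_lt_one_of_one_lt_of_neg one_lt_two (by linarith)
  set P : ℝ := (2:ℝ) ^ γ with hPdef
  have hP0 : 0 < P := Real.rpow_pos_of_pos two_pos _
  have hP1 : 1 < P := (Real.one_lt_rpow_iff_of_pos two_pos).2 (Or.inl ⟨one_lt_two, hγ0⟩)
  set θ : ℝ := 1 - γ * (1-β) with hθdef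
  set m : ℝ := γ * (1-β) with hmdef
  have hm0 : 0 < m := by positivity
  have hθ0 : 0 < θ := by
    have h := mul_lt_mul_of_pos_right hγδ h1β
    rw [inv_mul_cancel₀ h1β.ne'] at h
    simp only [hθdef]; linarith
  have hθm : θ + m = 1 := by simp [hθdef]
  have hP1' : 0 < (P-1)⁻¹ := inv_pos.2 (by linarith)
  have hq1' : 0 < (1-q)⁻¹ := inv_pos.2 (by linarith)
  have hC₁0 : 0 < P * P * c ^ m * ((P-1)⁻¹ + (1-q)⁻¹) :=
    _root_.mul_pos (by positivity) (by linarith)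
  have hC₂0 : 0 < P * c ^ (1-θ) * (1-q)⁻¹ := _root_.mul_pos (by positivity) hq1'
  refine ⟨P * P * c ^ m * ((P-1)⁻¹ + (1-q)⁻¹) + P * c ^ (1-θ) * (1-q)⁻¹, by linarith,
    fun a ha => ?_⟩
  set C₁ : ℝ := P * P * c ^ m * ((P-1)⁻¹ + (1-q)⁻¹) with hC₁
  set C₂ : ℝ := P * c ^ (1-θ) * (1-q)⁻¹ with hC₂
  -- basic facts about tk
  have htk_nonneg : ∀ k, 0 ≤ tk β γ a k := by
    intro k
    apply mul_nonneg (Real.rpow_nonneg (by positivity) _)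
    exact le_min ha.le (by positivity)
  have htk_le_geom : ∀ k, tk β γ a k ≤ P * c * q ^ k := by
    intro k
    have h1 : tk β γ a k ≤ ((2:ℝ)^(k+1)) ^ γ * (c * ((2:ℝ)^k) ^ (-δ)) :=
      mul_le_mul_of_nonneg_left (min_le_right _ _) (Real.rpow_nonneg (by positivity) _)
    refine h1.trans_eq ?_
    have h2 : ((2:ℝ)^(k+1)) ^ γ = P * ((2:ℝ)^k) ^ γ := by
      rw [pow_rpow_swap (by norm_num) γ (k+1), pow_succ, mul_comm,
        ← pow_rpow_swap (by norm_num) γ k]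
    rw [h2]
    have h3 : ((2:ℝ)^k : ℝ) ^ γ * ((2:ℝ)^k) ^ (-δ) = q ^ k := by
      rw [← Real.rpow_add (by positivity), ← sub_eq_add_neg,
        pow_rpow_swap (by norm_num) (γ - δ) k]
    calc P * ((2:ℝ)^k) ^ γ * (c * ((2:ℝ)^k) ^ (-δ))
        = P * c * (((2:ℝ)^k) ^ γ * ((2:ℝ)^k) ^ (-δ)) := by ring
      _ = P * c * q ^ k := by rw [h3]
  have hsum_geom : Summable (fun k : ℕ => P * c * q ^ k) :=
    (summable_geometric_of_lt_one hq0.le hq1).mul_left _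
  have hsumt : Summable (tk β γ a) :=
    Summable.of_nonneg_of_le htk_nonneg htk_le_geom hsum_geom
  refine ⟨hsumt, ?_⟩
  -- choose split point
  set x : ℝ := (c / a) ^ (1 - β) with hxdef
  have hx0 : 0 < x := Real.rpow_pos_of_pos (by positivity) _
  set K : ℕ := ⌈Real.logb 2 x⌉₊ with hKdef
  -- majorant sequence
  set v : ℕ → ℝ := fun k => if k < K then P ^ (k+1) * a else P * c * q ^ k with hvdef
  have htk_le_v : ∀ k, tk β γ a k ≤ v k := by
    intro k
    simp only [hvdef]
    by_cases hk : k < K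
    · rw [if_pos hk]
      have h := mul_le_mul_of_nonneg_left (min_le_left a ((1-β) ^ (-(1-β)⁻¹) * ((2:ℝ)^k) ^ (-(1-β)⁻¹)))
        (Real.rpow_nonneg (by positivity : (0:ℝ) ≤ (2:ℝ)^(k+1)) γ)
      have h' : tk β γ a k ≤ ((2:ℝ)^(k+1)) ^ γ * a := h
      rwa [pow_rpow_swap (by norm_num) γ (k+1)] at h'
    · rw [if_neg hk]; exact htk_le_geom k
  have hsumv : Summable v := by
    rw [← summable_nat_add_iff K]
    apply Summable.congr ((summable_geometric_of_lt_one hq0.le hq1).mul_left (P * c * q ^ K))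
    intro n
    simp only [hvdef, if_neg (by omega : ¬ n + K < K), pow_add]
    ring
  have hmain : ∑' k, tk β γ a k ≤ ∑ k ∈ Finset.range K, v k + ∑' (k : ℕ), v (k + K) := by
    rw [Summable.sum_add_tsum_nat_add K hsumv]
    exact Summable.tsum_le_tsum htk_le_v hsumt hsumv
  -- tail sum value
  have htail : ∑' (k : ℕ), v (k + K) = P * c * q ^ K * (1-q)⁻¹ := by
    have h : ∀ k : ℕ, v (k + K) = (P * c * q ^ K) * q ^ k := by
      intro k
      simp only [hvdef, if_neg (by omega : ¬ k + K < K), pow_add]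
      ring
    rw [tsum_congr h, tsum_mul_left, tsum_geometric_of_lt_one hq0.le hq1]
  -- head sum bound
  have hhead : ∑ k ∈ Finset.range K, v k ≤ P * (P ^ K * (P - 1)⁻¹) * a := by
    have h1 : ∀ k ∈ Finset.range K, v k = P ^ (k+1) * a := by
      intro k hk
      simp only [hvdef, if_pos (Finset.mem_range.1 hk)]
    rw [Finset.sum_congr rfl h1]
    have h2 : ∑ k ∈ Finset.range K, P ^ (k+1) * a = P * (∑ k ∈ Finset.range K, P ^ k) * a := by
      rw [Finset.mul_sum, Finset.sum_mul]
      exact Finset.sum_congr rfl fun k _ => by ring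
    rw [h2, geom_sum_eq hP1.ne' K]
    have h3 : (P ^ K - 1) / (P - 1) ≤ P ^ K * (P - 1)⁻¹ := by
      rw [div_eq_mul_inv]
      exact mul_le_mul_of_nonneg_right (by linarith) hP1'.le
    exact mul_le_mul_of_nonneg_right (mul_le_mul_of_nonneg_left h3 hP0.le) ha.le
  -- key identity : x ^ γ * a = c ^ m * a ^ θ
  have hsplit : a ^ θ * a ^ m = a := by
    rw [← Real.rpow_add ha, hθm, Real.rpow_one]
  have ham : (0:ℝ) < a ^ m := Real.rpow_pos_of_pos ha m
  have hkey : x ^ γ * a = c ^ m * a ^ θ := by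
    rw [hxdef, ← Real.rpow_mul (by positivity), mul_comm (1-β) γ, ← hmdef,
      Real.div_rpow hc.le ha.le, div_mul_eq_mul_div, div_eq_iff ham.ne', mul_assoc, hsplit]
  by_cases hK0 : K = 0
  · -- c ≤ a case
    have hca : c ≤ a := by
      by_contra hlt
      push_neg at hlt
      have hxx : 1 < x := (Real.one_lt_rpow_iff_of_pos (by positivity)).2
        (Or.inl ⟨(one_lt_div ha).2 hlt, h1β⟩)
      have : 0 < K := Nat.ceil_pos.2 (Real.logb_pos one_lt_two hxx)
      omega
    have hcc : c ^ (1-θ) * c ^ θ = c := by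
      rw [← Real.rpow_add hc]; norm_num
    have hstep : ∑' k, tk β γ a k ≤ C₂ * c ^ θ := by
      refine hmain.trans ?_
      rw [htail, hK0]
      simp only [Finset.range_zero, Finset.sum_empty, pow_zero, zero_add, mul_one]
      calc P * c * (1-q)⁻¹ = P * (c ^ (1-θ) * c ^ θ) * (1-q)⁻¹ := by rw [hcc]
        _ = C₂ * c ^ θ := by rw [hC₂]; ring
        _ ≤ C₂ * c ^ θ := le_refl _
    have hstep2 : C₂ * c ^ θ ≤ C₂ * a ^ θ :=
      mul_le_mul_of_nonneg_left (Real.rpow_le_rpow hc.le hca hθ0.le) hC₂0.le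
    have haθ : 0 ≤ a ^ θ := Real.rpow_nonneg ha.le θ
    exact (hstep.trans hstep2).trans (mul_le_mul_of_nonneg_right (by linarith) haθ)
  · -- a < c regime : K ≥ 1
    have hKpos : 0 < K := Nat.pos_of_ne_zero hK0
    have hL0 : 0 < Real.logb 2 x := Nat.ceil_pos.1 hKpos
    have hxK : x ≤ (2:ℝ) ^ K := by
      calc x = 2 ^ Real.logb 2 x := (Real.rpow_logb two_pos (by norm_num) hx0).symm
        _ ≤ 2 ^ (K:ℝ) := Real.rpow_le_rpow_of_exponent_le one_le_two (Nat.le_ceil _)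
        _ = (2:ℝ) ^ K := Real.rpow_natCast 2 K
    have h2K : ((2:ℝ) ^ K : ℝ) ≤ 2 * x := by
      have h9 : (K:ℝ) ≤ Real.logb 2 x + 1 := (Nat.ceil_lt_add_one hL0.le).le
      calc ((2:ℝ) ^ K : ℝ) = 2 ^ (K:ℝ) := (Real.rpow_natCast 2 K).symm
        _ ≤ 2 ^ (Real.logb 2 x + 1) := Real.rpow_le_rpow_of_exponent_le one_le_two h9
        _ = 2 ^ Real.logb 2 x * 2 ^ (1:ℝ) := Real.rpow_add two_pos _ _
        _ = 2 * x := by rw [Real.rpow_logb two_pos (by norm_num) hx0, Real.rpow_one]; ring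
    have h2xγ : ((2:ℝ)^K : ℝ) ^ γ ≤ P * x ^ γ := by
      calc ((2:ℝ)^K : ℝ) ^ γ ≤ (2*x) ^ γ := Real.rpow_le_rpow (by positivity) h2K hγ0.le
        _ = P * x ^ γ := by rw [Real.mul_rpow (by norm_num) hx0.le]
    have hPK : P ^ K ≤ P * x ^ γ := by
      rw [← pow_rpow_swap (by norm_num : (0:ℝ) ≤ 2) γ K]
      exact h2xγ
    have hxδ : x ^ (-δ) = a / c := by
      have h6 : (1-β) * (-δ) = -1 := by rw [mul_neg, hδβ]
      rw [hxdef, ← Real.rpow_mul (by positivity), h6, Real.rpow_neg_one, inv_div]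
    have hqK : q ^ K ≤ P * x ^ γ * (a / c) := by
      have e1 : q ^ K = ((2:ℝ)^K : ℝ) ^ γ * ((2:ℝ)^K : ℝ) ^ (-δ) := by
        rw [← Real.rpow_add (by positivity), ← sub_eq_add_neg,
          pow_rpow_swap (by norm_num) (γ - δ) K]
      have e2 : ((2:ℝ)^K : ℝ) ^ (-δ) ≤ a / c := by
        rw [← hxδ]
        exact Real.rpow_le_rpow_of_nonpos hx0 hxK (by linarith)
      rw [e1]
      exact mul_le_mul h2xγ e2 (Real.rpow_nonneg (by positivity) _) (by positivity)
    have hheadb : ∑ k ∈ Finset.range K, v k ≤ P * (P * x ^ γ * (P - 1)⁻¹) * a :=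
      hhead.trans (mul_le_mul_of_nonneg_right
        (mul_le_mul_of_nonneg_left (mul_le_mul_of_nonneg_right hPK hP1'.le) hP0.le) ha.le)
    have htailb : P * c * q ^ K * (1-q)⁻¹ ≤ P * c * (P * x ^ γ * (a / c)) * (1-q)⁻¹ :=
      mul_le_mul_of_nonneg_right
        (mul_le_mul_of_nonneg_left hqK (by positivity)) hq1'.le
    have hbound : ∑' k, tk β γ a k ≤
        P * (P * x ^ γ * (P - 1)⁻¹) * a + P * c * (P * x ^ γ * (a / c)) * (1-q)⁻¹ := by
      refine hmain.trans ?_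
      rw [htail]
      exact add_le_add hheadb htailb
    have hca' : c * (a / c) = a := by field_simp
    have heq : P * (P * x ^ γ * (P - 1)⁻¹) * a + P * c * (P * x ^ γ * (a / c)) * (1-q)⁻¹
        = P * P * ((P-1)⁻¹ + (1-q)⁻¹) * (x ^ γ * a) := by
      rw [show P * c * (P * x ^ γ * (a / c)) * (1-q)⁻¹
          = P * P * (x ^ γ * (c * (a/c))) * (1-q)⁻¹ from by ring, hca']
      ring
    have hfin : ∑' k, tk β γ a k ≤ C₁ * a ^ θ := by
      refine hbound.trans_eq ?_
      rw [heq, hkey, hC₁]; ring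
    have haθ : 0 ≤ a ^ θ := Real.rpow_nonneg ha.le θ
    exact hfin.trans (mul_le_mul_of_nonneg_right (by linarith) haθ)

/-- First weighted integral bound of Lemma 3.7: for `β ∈ (0,1)` and `γ ∈ (1, (1-β)⁻¹)`
there is a constant `C = C(β,γ)` so that whenever `a > 0`, `s ≥ 1` and `h ≥ 0` is
measurable with tail bound `∫_t^s h ≤ (a^(β-1) + (1-β)t)^(-1/(1-β))` for all `t ∈ [1,s]`,
one has `∫_1^s r^γ h(r) dr ≤ C a^(1-γ(1-β))`. -/
theorem weighted_integral_bound_first (β γ : ℝ) (hβ : β ∈ Set.Ioo (0 : ℝ) 1)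
    (hγ : γ ∈ Set.Ioo (1 : ℝ) (1 - β)⁻¹) :
    ∃ C > 0, ∀ a : ℝ, 0 < a → ∀ s : ℝ, 1 ≤ s → ∀ h : ℝ → NNReal, Measurable h →
      (∀ t ∈ Set.Icc (1 : ℝ) s,
        (∫⁻ r in Set.Ioc t s, (h r : ℝ≥0∞)) ≤
          ENNReal.ofReal ((a ^ (β - 1) + (1 - β) * t) ^ (-(1 - β)⁻¹))) →
      (∫⁻ r in Set.Ioc (1 : ℝ) s, ENNReal.ofReal (r ^ γ) * (h r : ℝ≥0∞)) ≤
        ENNReal.ofReal (C * a ^ (1 - γ * (1 - β))) := by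
  obtain ⟨C, hC, hCs⟩ := aux_sum β γ hβ hγ
  obtain ⟨hβ0, hβ1⟩ := hβ
  obtain ⟨hγ1, hγδ⟩ := hγ
  have h1β : (0:ℝ) < 1 - β := by linarith
  have hγ0 : (0:ℝ) < γ := by linarith
  refine ⟨C, hC, fun a ha s hs h hmeas htail => ?_⟩
  obtain ⟨hsumt, hts⟩ := hCs a ha
  have htk_nonneg : ∀ k, 0 ≤ tk β γ a k := fun k =>
    mul_nonneg (Real.rpow_nonneg (by positivity) _) (le_min ha.le (by positivity))
  -- dyadic cover
  have hcover : Set.Ioc (1:ℝ) s ⊆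
      ⋃ k : ℕ, (Set.Ioc ((2:ℝ)^k) ((2:ℝ)^(k+1)) ∩ Set.Ioc 1 s) := by
    intro r hr
    obtain ⟨hr1, hrs⟩ := hr
    have hr0 : (0:ℝ) < r := by linarith
    set L := Real.logb 2 r with hL
    have hL0 : 0 < L := Real.logb_pos one_lt_two hr1
    have hKpos : 0 < ⌈L⌉₊ := Nat.ceil_pos.2 hL0
    refine Set.mem_iUnion.2 ⟨⌈L⌉₊ - 1, ⟨⟨?_, ?_⟩, hr1, hrs⟩⟩
    · have hcast : ((⌈L⌉₊ - 1 : ℕ) : ℝ) = (⌈L⌉₊ : ℝ) - 1 := by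
        rw [Nat.cast_sub hKpos]; norm_num
      have h1 : ((⌈L⌉₊ - 1 : ℕ) : ℝ) < L := by
        rw [hcast]
        have := Nat.ceil_lt_add_one hL0.le
        linarith
      calc (2:ℝ)^(⌈L⌉₊ - 1) = 2 ^ (((⌈L⌉₊ - 1 : ℕ)):ℝ) := (Real.rpow_natCast 2 _).symm
        _ < 2 ^ L := Real.rpow_lt_rpow_of_exponent_lt one_lt_two h1
        _ = r := Real.rpow_logb two_pos (by norm_num) hr0
    · have hsucc : ⌈L⌉₊ - 1 + 1 = ⌈L⌉₊ := Nat.succ_pred_eq_of_pos hKpos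
      rw [hsucc]
      calc r = 2 ^ L := (Real.rpow_logb two_pos (by norm_num) hr0).symm
        _ ≤ 2 ^ ((⌈L⌉₊:ℕ):ℝ) := Real.rpow_le_rpow_of_exponent_le one_le_two (Nat.le_ceil L)
        _ = (2:ℝ)^(⌈L⌉₊:ℕ) := Real.rpow_natCast _ _
  -- per-block estimate
  have hblock : ∀ k : ℕ, (∫⁻ r in (Set.Ioc ((2:ℝ)^k) ((2:ℝ)^(k+1)) ∩ Set.Ioc 1 s),
      ENNReal.ofReal (r ^ γ) * (h r : ℝ≥0∞)) ≤ ENNReal.ofReal (tk β γ a k) := by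
    intro k
    by_cases hks : (2:ℝ)^k ≤ s
    · have hg_min : (a ^ (β-1) + (1-β) * (2:ℝ)^k) ^ (-(1-β)⁻¹) ≤
          min a ((1-β) ^ (-(1-β)⁻¹) * ((2:ℝ)^k) ^ (-(1-β)⁻¹)) := by
        have hbase : (0:ℝ) < a ^ (β-1) := Real.rpow_pos_of_pos ha _
        have hneg : -(1-β)⁻¹ ≤ 0 := by
          have : 0 < (1-β)⁻¹ := inv_pos.2 h1β
          linarith
        refine le_min ?_ ?_
        · have h1 : a ^ (β-1) ≤ a ^ (β-1) + (1-β) * (2:ℝ)^k :=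
            le_add_of_nonneg_right (by positivity)
          have h2 := Real.rpow_le_rpow_of_nonpos hbase h1 hneg
          have h3 : (a ^ (β-1)) ^ (-(1-β)⁻¹) = a := by
            rw [← Real.rpow_mul ha.le]
            have he : (β-1) * (-(1-β)⁻¹) = (1-β) * (1-β)⁻¹ := by ring
            rw [he, mul_inv_cancel₀ h1β.ne', Real.rpow_one]
          linarith
        · have h1 : (1-β) * (2:ℝ)^k ≤ a ^ (β-1) + (1-β) * (2:ℝ)^k :=
            le_add_of_nonneg_left hbase.le
          have h2 := Real.rpow_le_rpow_of_nonpos (by positivity) h1 hneg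
          rwa [Real.mul_rpow h1β.le (by positivity)] at h2
      have hsub : Set.Ioc ((2:ℝ)^k) ((2:ℝ)^(k+1)) ∩ Set.Ioc 1 s ⊆ Set.Ioc ((2:ℝ)^k) s :=
        fun r hr => ⟨hr.1.1, hr.2.2⟩
      have h2k1 : (1:ℝ) ≤ (2:ℝ)^k := one_le_pow₀ (by norm_num)
      calc (∫⁻ r in (Set.Ioc ((2:ℝ)^k) ((2:ℝ)^(k+1)) ∩ Set.Ioc 1 s),
            ENNReal.ofReal (r ^ γ) * (h r : ℝ≥0∞))
          ≤ ∫⁻ r in (Set.Ioc ((2:ℝ)^k) ((2:ℝ)^(k+1)) ∩ Set.Ioc 1 s),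
            ENNReal.ofReal (((2:ℝ)^(k+1)) ^ γ) * (h r : ℝ≥0∞) := by
            refine setLIntegral_mono (measurable_const.mul hmeas.coe_nnreal_ennreal) ?_
            intro r hr
            refine mul_le_mul_left (ENNReal.ofReal_le_ofReal ?_) _
            have hr0 : (0:ℝ) ≤ r := le_trans (by positivity) hr.1.1.le
            exact Real.rpow_le_rpow hr0 hr.1.2 hγ0.le
        _ = ENNReal.ofReal (((2:ℝ)^(k+1)) ^ γ) *
            ∫⁻ r in (Set.Ioc ((2:ℝ)^k) ((2:ℝ)^(k+1)) ∩ Set.Ioc 1 s), (h r : ℝ≥0∞) :=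
            lintegral_const_mul _ hmeas.coe_nnreal_ennreal
        _ ≤ ENNReal.ofReal (((2:ℝ)^(k+1)) ^ γ) *
            ∫⁻ r in Set.Ioc ((2:ℝ)^k) s, (h r : ℝ≥0∞) :=
            mul_le_mul_right (lintegral_mono_set hsub) _
        _ ≤ ENNReal.ofReal (((2:ℝ)^(k+1)) ^ γ) *
            ENNReal.ofReal ((a ^ (β-1) + (1-β) * (2:ℝ)^k) ^ (-(1-β)⁻¹)) :=
            mul_le_mul_right (htail _ ⟨h2k1, hks⟩) _
        _ = ENNReal.ofReal (((2:ℝ)^(k+1)) ^ γ *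
            (a ^ (β-1) + (1-β) * (2:ℝ)^k) ^ (-(1-β)⁻¹)) :=
            (ENNReal.ofReal_mul (Real.rpow_nonneg (by positivity) _)).symm
        _ ≤ ENNReal.ofReal (tk β γ a k) := by
            refine ENNReal.ofReal_le_ofReal ?_
            exact mul_le_mul_of_nonneg_left hg_min (Real.rpow_nonneg (by positivity) _)
    · have hempty : Set.Ioc ((2:ℝ)^k) ((2:ℝ)^(k+1)) ∩ Set.Ioc 1 s = ∅ := by
        rw [Set.eq_empty_iff_forall_notMem]
        rintro r ⟨⟨h1, _⟩, ⟨_, h2⟩⟩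
        push_neg at hks
        linarith
      rw [hempty]
      simp
  calc (∫⁻ r in Set.Ioc (1:ℝ) s, ENNReal.ofReal (r ^ γ) * (h r : ℝ≥0∞))
      ≤ ∫⁻ r in ⋃ k : ℕ, (Set.Ioc ((2:ℝ)^k) ((2:ℝ)^(k+1)) ∩ Set.Ioc 1 s),
        ENNReal.ofReal (r ^ γ) * (h r : ℝ≥0∞) := lintegral_mono_set hcover
    _ ≤ ∑' k : ℕ, ∫⁻ r in (Set.Ioc ((2:ℝ)^k) ((2:ℝ)^(k+1)) ∩ Set.Ioc 1 s),
        ENNReal.ofReal (r ^ γ) * (h r : ℝ≥0∞) := lintegral_iUnion_le _ _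
    _ ≤ ∑' k : ℕ, ENNReal.ofReal (tk β γ a k) := ENNReal.tsum_le_tsum hblock
    _ = ENNReal.ofReal (∑' k, tk β γ a k) :=
        (ENNReal.ofReal_tsum_of_nonneg htk_nonneg hsumt).symm
    _ ≤ ENNReal.ofReal (C * a ^ (1 - γ * (1 - β))) := ENNReal.ofReal_le_ofReal hts
end

section
/- Let β ∈ (0,1) and γ ∈ (1, (1−β)^{−1}). There exists a constant C, depending only on β and γ, with the following property: for every a > 0, all real numbers s and T with s + 1 ≤ T, and every nonnegative measurable function h : ℝ → [0,∞) such that for all t ∈ [s, T−1] one has ∫_s^t h(r) dr ≤ ( a^{β−1} + (1−β)·(T−t) )^{−1/(1−β)}, it holds that ∫_s^{T−1} (T−r)^{γ} h(r) dr ≤ C · a^{1 − γ(1−β)}. -/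
/-!
Write `A = a^(β-1)`, `c = 1 - β`, `q = 1/c`. By the layer-cake formula for the measure `h dr` on
`(s, T-1]`, the weighted integral is `γ ∫₀^∞ t^(γ-1) m(t) dt`, where `m(t)` is the `h`-mass of
`{T - r ≥ t}`. That set is an interval `(s, t']` with `T - t' = max 1 t`, so the hypothesis gives
`m(t) ≤ (A + c t)^(-q)`. Since `γ < q`, the integral `∫₀^∞ t^(γ-1) (A + c t)^(-q) dt` converges and
scales as `c^(-γ) A^(γ-q) = c^(-γ) a^(1-γ(1-β))`.
-/

open MeasureTheory ENNReal Set

lemma lintegral_Ioc_zero_rpow {r : ℝ} (hr : -1 < r) {M : ℝ} (hM : 0 ≤ M) :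
    ∫⁻ t in Ioc 0 M, ENNReal.ofReal (t ^ r) = ENNReal.ofReal (M ^ (r + 1) / (r + 1)) := by
  have hint : IntegrableOn (fun t : ℝ => t ^ r) (Ioc 0 M) :=
    (intervalIntegrable_iff_integrableOn_Ioc_of_le hM).mp
      (intervalIntegral.intervalIntegrable_rpow' hr)
  rw [← ofReal_integral_eq_lintegral_ofReal hint
      (ae_restrict_of_forall_mem measurableSet_Ioc fun t ht => Real.rpow_nonneg ht.1.le r),
    ← intervalIntegral.integral_of_le hM, integral_rpow (Or.inl hr),
    Real.zero_rpow (by linarith), sub_zero]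

lemma lintegral_Ioi_rpow {r : ℝ} (hr : r < -1) {M : ℝ} (hM : 0 < M) :
    ∫⁻ t in Ioi M, ENNReal.ofReal (t ^ r) = ENNReal.ofReal (-M ^ (r + 1) / (r + 1)) := by
  rw [← ofReal_integral_eq_lintegral_ofReal (integrableOn_Ioi_rpow_of_lt hr hM)
      (ae_restrict_of_forall_mem measurableSet_Ioi fun t ht => Real.rpow_nonneg (hM.trans ht).le r),
    integral_Ioi_rpow_of_lt hr hM]

/-- Below `M = A / c` the factor `(A + c t)^(-q)` is at most `A^(-q)`, above it at most `(c t)^(-q)`;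
both pieces contribute `c^(-p) A^(p-q)` up to a constant. -/
lemma lintegral_rpow_add_mul_mul_rpow_le {p q A c : ℝ} (hp : 0 < p) (hpq : p < q) (hA : 0 < A)
    (hc : 0 < c) :
    ∫⁻ t in Ioi 0, ENNReal.ofReal ((A + c * t) ^ (-q)) * ENNReal.ofReal (t ^ (p - 1)) ≤
      ENNReal.ofReal (q / (p * (q - p)) * c ^ (-p) * A ^ (p - q)) := by
  set M := A / c
  have hM : 0 < M := div_pos hA hc
  have near : ∫⁻ t in Ioc 0 M, ENNReal.ofReal ((A + c * t) ^ (-q)) * ENNReal.ofReal (t ^ (p - 1)) ≤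
      ENNReal.ofReal (A ^ (-q) * (M ^ p / p)) := by
    calc _ ≤ ∫⁻ t in Ioc 0 M, ENNReal.ofReal (A ^ (-q)) * ENNReal.ofReal (t ^ (p - 1)) := by
          refine setLIntegral_mono' measurableSet_Ioc fun t ht => ?_
          gcongr ENNReal.ofReal ?_ * _
          exact Real.rpow_le_rpow_of_nonpos hA
            (le_add_of_nonneg_right (mul_nonneg hc.le ht.1.le)) (by linarith)
      _ = _ := by
          rw [lintegral_const_mul' _ _ ofReal_ne_top, lintegral_Ioc_zero_rpow (by linarith) hM.le,
            sub_add_cancel, ← ofReal_mul (Real.rpow_nonneg hA.le _)]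
  have far : ∫⁻ t in Ioi M, ENNReal.ofReal ((A + c * t) ^ (-q)) * ENNReal.ofReal (t ^ (p - 1)) ≤
      ENNReal.ofReal (c ^ (-q) * (M ^ (p - q) / (q - p))) := by
    calc _ ≤ ∫⁻ t in Ioi M, ENNReal.ofReal (c ^ (-q)) * ENNReal.ofReal (t ^ (p - 1 - q)) := by
          refine setLIntegral_mono' measurableSet_Ioi fun t ht => ?_
          have ht0 : 0 < t := hM.trans ht
          rw [← ofReal_mul (by positivity), ← ofReal_mul (by positivity)]
          refine ofReal_le_ofReal ?_
          calc (A + c * t) ^ (-q) * t ^ (p - 1) ≤ (c * t) ^ (-q) * t ^ (p - 1) := by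
                gcongr ?_ * _
                exact Real.rpow_le_rpow_of_nonpos (by positivity) (by linarith) (by linarith)
            _ = c ^ (-q) * t ^ (p - 1 - q) := by
                rw [Real.mul_rpow hc.le ht0.le, sub_eq_add_neg (p - 1), Real.rpow_add ht0]; ring
      _ = _ := by
          rw [lintegral_const_mul' _ _ ofReal_ne_top, lintegral_Ioi_rpow (by linarith) hM,
            ← ofReal_mul (Real.rpow_nonneg hc.le _)]
          congr 2
          rw [show p - 1 - q + 1 = p - q by ring, neg_div, ← div_neg, neg_sub]
  have hnear : A ^ (-q) * M ^ p = c ^ (-p) * A ^ (p - q) := by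
    rw [Real.div_rpow hA.le hc.le, Real.rpow_sub hA, Real.rpow_neg hA.le, Real.rpow_neg hc.le]
    field_simp
  have hfar : c ^ (-q) * M ^ (p - q) = c ^ (-p) * A ^ (p - q) := by
    rw [Real.div_rpow hA.le hc.le, Real.rpow_sub hc, Real.rpow_neg hc.le, Real.rpow_neg hc.le]
    field_simp
  rw [← Ioc_union_Ioi_eq_Ioi hM.le, lintegral_union measurableSet_Ioi Ioc_disjoint_Ioi_same]
  refine (add_le_add near far).trans_eq ?_
  rw [← ofReal_add (by positivity) (by positivity)]
  congr 1
  have : q - p ≠ 0 := by linarith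
  rw [mul_div_assoc', mul_div_assoc', hnear, hfar]
  field_simp
  ring

lemma withDensity_setOf_le_sub_le {g : ℝ → ℝ≥0∞} {B : ℝ → ℝ} {s T u : ℝ}
    (hB : AntitoneOn B (Ioi 0))
    (hg : ∀ t ∈ Icc s (T - 1), ∫⁻ r in Ioc s t, g r ≤ ENNReal.ofReal (B (T - t))) (hu : 0 < u) :
    (volume.restrict (Ioc s (T - 1))).withDensity g {r | u ≤ T - r} ≤ ENNReal.ofReal (B u) := by
  have hset : {r : ℝ | u ≤ T - r} = Iic (T - u) := by ext r; simp [le_sub_comm]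
  rw [hset, withDensity_apply _ measurableSet_Iic, Measure.restrict_restrict measurableSet_Iic,
    inter_comm, Ioc_inter_Iic]
  by_cases hs : s < (T - 1) ⊓ (T - u)
  · refine (hg _ ⟨hs.le, inf_le_left⟩).trans (ofReal_le_ofReal (hB hu ?_ ?_))
    · simp only [mem_Ioi]; rw [sub_inf]; simp
    · rw [sub_inf]; simp
  · rw [Ioc_eq_empty hs, Measure.restrict_empty, lintegral_zero_measure]
    exact bot_le

/-- Second weighted integral bound of Lemma 3.7: for `β ∈ (0,1)` and `γ ∈ (1, (1-β)⁻¹)`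
there is a constant `C = C(β,γ)` so that whenever `a > 0`, `s + 1 ≤ T` and `h ≥ 0` is
measurable with bound `∫_s^t h ≤ (a^(β-1) + (1-β)(T-t))^(-1/(1-β))` for all `t ∈ [s,T-1]`,
one has `∫_s^{T-1} (T-r)^γ h(r) dr ≤ C a^(1-γ(1-β))`. -/
theorem weighted_integral_bound_second (β γ : ℝ) (hβ : β ∈ Set.Ioo (0 : ℝ) 1)
    (hγ : γ ∈ Set.Ioo (1 : ℝ) (1 - β)⁻¹) :
    ∃ C > 0, ∀ a : ℝ, 0 < a → ∀ s T : ℝ, s + 1 ≤ T → ∀ h : ℝ → NNReal, Measurable h →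
      (∀ t ∈ Set.Icc s (T - 1),
        (∫⁻ r in Set.Ioc s t, (h r : ℝ≥0∞)) ≤
          ENNReal.ofReal ((a ^ (β - 1) + (1 - β) * (T - t)) ^ (-(1 - β)⁻¹))) →
      (∫⁻ r in Set.Ioc s (T - 1), ENNReal.ofReal ((T - r) ^ γ) * (h r : ℝ≥0∞)) ≤
        ENNReal.ofReal (C * a ^ (1 - γ * (1 - β))) := by
  obtain ⟨hβ0, hβ1⟩ := hβ
  obtain ⟨hγ1, hγq⟩ := hγ
  set c := 1 - β
  set q := c⁻¹
  have hc : 0 < c := by linarith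
  have hγ0 : 0 < γ := by linarith
  refine ⟨q / (q - γ) * c ^ (-γ), by have := sub_pos.mpr hγq; positivity,
    fun a ha s T _ h hh hbound => ?_⟩
  set A := a ^ (β - 1)
  have hA : 0 < A := Real.rpow_pos_of_pos ha _
  have hApow : A ^ (γ - q) = a ^ (1 - γ * c) := by
    have hcq : c * q = 1 := mul_inv_cancel₀ hc.ne'
    rw [← Real.rpow_mul ha.le]
    congr 1
    linear_combination hcq
  set μ := (volume.restrict (Ioc s (T - 1))).withDensity fun r => (h r : ℝ≥0∞)
  have htail : ∀ t ∈ Ioi (0 : ℝ), μ {r | t ≤ T - r} ≤ ENNReal.ofReal ((A + c * t) ^ (-q)) :=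
    fun t ht => withDensity_setOf_le_sub_le (B := fun u => (A + c * u) ^ (-q))
      (fun u hu v _ huv => Real.rpow_le_rpow_of_nonpos (by have := hu.out; positivity)
        (by gcongr) (by simp only [neg_nonpos]; positivity)) hbound ht
  calc _ = ∫⁻ r, ENNReal.ofReal ((T - r) ^ γ) ∂μ := by
        rw [lintegral_withDensity_eq_lintegral_mul _ hh.coe_nnreal_ennreal (by fun_prop)]
        simp_rw [Pi.mul_apply, mul_comm]
    _ = ENNReal.ofReal γ * ∫⁻ t in Ioi 0, μ {r | t ≤ T - r} * ENNReal.ofReal (t ^ (γ - 1)) :=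
        lintegral_rpow_eq_lintegral_meas_le_mul μ
          ((withDensity_absolutelyContinuous _ _).ae_le
            (ae_restrict_of_forall_mem measurableSet_Ioc fun r hr =>
              sub_nonneg.mpr (by linarith [hr.2])))
          (by fun_prop) hγ0
    _ ≤ ENNReal.ofReal γ * ENNReal.ofReal (q / (γ * (q - γ)) * c ^ (-γ) * A ^ (γ - q)) := by
        gcongr
        exact (setLIntegral_mono' measurableSet_Ioi fun t ht => by gcongr; exact htail t ht).trans
          (lintegral_rpow_add_mul_mul_rpow_le hγ0 hγq hA hc)
    _ = _ := by
        rw [← ofReal_mul hγ0.le, hApow]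
        congr 1
        field_simp
end

section
/- Let n ≥ 1, α ∈ (0,1), Λ > 0, and let f : ℝⁿ × ℝ × ℝⁿ → ℝ be three times continuously differentiable with all partial derivatives up to order 3 bounded in absolute value by Λ on the set { (p,s,y) : p ∈ ℝⁿ, |s| + |y| ≤ 1 }. Suppose that for every p ∈ ℝⁿ one has f(p,0,0) = 0, ∂_s f(p,0,0) = 0, and ∇_y f(p,0,0) = 0. Then there exists a constant C, depending only on n, α and Λ, such that: for every continuously differentiable v : ℝⁿ → ℝ with M := sup_p (|v(p)| + |∇v(p)|) ≤ 1 whose gradient ∇v is α-Hölder with seminorm H := sup_{p≠q} |∇v(p) − ∇v(q)| / |p−q|^{α} < ∞, the function g(p) := f(p, v(p), ∇v(p)) satisfies sup_p |g(p)| + sup_{p≠q} |g(p) − g(q)| / |p−q|^{α} ≤ C · M · (M + H). -/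
/-!
Write `ρ(p, s, y) = |s| + ‖y‖` (`jetNorm`). Since `f` and `Df` vanish on the zero section
`ρ = 0`, the mean value inequality on the convex fibres `{p} × {ρ ≤ m}` gives `‖Df‖ ≤ Λρ` and
`‖f‖ ≤ Λρ²`. The `p`-derivative is even quadratically small: by symmetry of the Hessian,
`∂_(s,y) ∂_p f = ∂_p ∂_(s,y) f = 0` on the zero section, so the third-derivative bound gives
`‖∂_p f‖ ≤ Λρ²`. Along `p ↦ (p, v p, ∇v p)` the composition is therefore `ΛM²`-Lipschitz in the
`p`-slot and `ΛM`-Lipschitz in the jet slot, which together with `|v p - v q| ≤ M |p - q|` and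
`[∇v]_α ≤ H` gives the Hölder bound at distances `< 1`; at larger distances the sup bound
`‖f(p, v p, ∇v p)‖ ≤ ΛM²` suffices.
-/

open Set

lemma norm_sub_le_mul_rpow_of_dist_lt_one {X Y : Type*} [PseudoMetricSpace X]
    [SeminormedAddCommGroup Y] {g : X → Y}
    {A B α : ℝ} (hα : 0 ≤ α) (hA : ∀ p, ‖g p‖ ≤ A) (hAB : 2 * A ≤ B)
    (hloc : ∀ p q, dist p q < 1 → ‖g p - g q‖ ≤ B * dist p q ^ α) (p q : X) :
    ‖g p - g q‖ ≤ B * dist p q ^ α := by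
  rcases lt_or_ge (dist p q) 1 with hpq | hpq
  · exact hloc p q hpq
  have hB : 0 ≤ B := by linarith [(norm_nonneg _).trans (hA p)]
  calc ‖g p - g q‖ ≤ ‖g p‖ + ‖g q‖ := norm_sub_le _ _
    _ ≤ B := by linarith [hA p, hA q]
    _ ≤ B * dist p q ^ α := le_mul_of_one_le_right hB (Real.one_le_rpow hpq hα)

lemma abs_sub_le_mul_dist_of_norm_gradient_le {F : Type*} [NormedAddCommGroup F]
    [InnerProductSpace ℝ F] [CompleteSpace F] {v : F → ℝ} {M : ℝ} (hv : Differentiable ℝ v)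
    (hM : ∀ p, ‖gradient v p‖ ≤ M) (p q : F) : |v p - v q| ≤ M * dist p q := by
  have hM' : ∀ x ∈ univ, ‖fderiv ℝ v x‖ ≤ M := fun x _ => by
    simpa [gradient] using hM x
  simpa [Real.norm_eq_abs, dist_eq_norm] using
    convex_univ.norm_image_sub_le_of_norm_fderiv_le (fun x _ => hv x) hM' (mem_univ q) (mem_univ p)

section Jets

variable {E : Type*} [NormedAddCommGroup E]

noncomputable def jetNorm (z : E × ℝ × E) : ℝ := |z.2.1| + ‖z.2.2‖

def jetBall (p : E) (m : ℝ) : Set (E × ℝ × E) := {z | z.1 = p ∧ jetNorm z ≤ m}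

@[simp] lemma jetNorm_mk (p : E) (s : ℝ) (y : E) : jetNorm (p, s, y) = |s| + ‖y‖ := rfl

lemma jetNorm_nonneg (z : E × ℝ × E) : 0 ≤ jetNorm z := by unfold jetNorm; positivity

lemma jetNorm_add_le (z z' : E × ℝ × E) : jetNorm (z + z') ≤ jetNorm z + jetNorm z' := by
  simp only [jetNorm, Prod.snd_add, Prod.fst_add]
  linarith [abs_add_le z.2.1 z'.2.1, norm_add_le z.2.2 z'.2.2]

lemma norm_le_jetNorm_of_fst_eq_zero {z : E × ℝ × E} (h : z.1 = 0) : ‖z‖ ≤ jetNorm z := by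
  rw [Prod.norm_def, Prod.norm_def, h, norm_zero, Real.norm_eq_abs, jetNorm]
  exact max_le (jetNorm_nonneg z) (max_le (le_add_of_nonneg_right (norm_nonneg _))
    (le_add_of_nonneg_left (abs_nonneg _)))

variable [NormedSpace ℝ E] {Y : Type*} [NormedAddCommGroup Y] [NormedSpace ℝ Y]

lemma jetNorm_smul (c : ℝ) (z : E × ℝ × E) : jetNorm (c • z) = |c| * jetNorm z := by
  simp only [jetNorm, Prod.smul_snd, Prod.smul_fst, smul_eq_mul, abs_mul, norm_smul,
    Real.norm_eq_abs]
  ring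

lemma convex_jetBall (p : E) (m : ℝ) : Convex ℝ (jetBall p m) := by
  rintro z ⟨hz1, hz⟩ z' ⟨hz1', hz'⟩ a b ha hb hab
  refine ⟨by simp [hz1, hz1', ← add_smul, hab], ?_⟩
  calc jetNorm (a • z + b • z') ≤ a * jetNorm z + b * jetNorm z' := by
        simpa [jetNorm_smul, abs_of_nonneg ha, abs_of_nonneg hb] using
          jetNorm_add_le (a • z) (b • z')
    _ ≤ a * m + b * m := by gcongr
    _ = m := by rw [← add_mul, hab, one_mul]

lemma norm_sub_le_of_mem_jetBall {w : E × ℝ × E → Y} {p : E} {m K : ℝ}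
    (hw : Differentiable ℝ w) (hK : ∀ x ∈ jetBall p m, ‖fderiv ℝ w x‖ ≤ K)
    {z z' : E × ℝ × E} (hz : z ∈ jetBall p m) (hz' : z' ∈ jetBall p m) :
    ‖w z - w z'‖ ≤ K * jetNorm (z - z') := by
  have hK0 : 0 ≤ K := (norm_nonneg _).trans (hK z hz)
  calc ‖w z - w z'‖ ≤ K * ‖z - z'‖ :=
        (convex_jetBall p m).norm_image_sub_le_of_norm_fderiv_le (fun x _ => hw x) hK hz' hz
    _ ≤ K * jetNorm (z - z') := by
        gcongr
        exact norm_le_jetNorm_of_fst_eq_zero (by simp [hz.1, hz'.1])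

lemma norm_le_mul_jetNorm {w : E × ℝ × E → Y} {p : E} {m K : ℝ}
    (hw : Differentiable ℝ w) (hK : ∀ x ∈ jetBall p m, ‖fderiv ℝ w x‖ ≤ K)
    (h0 : w (p, 0, 0) = 0) {z : E × ℝ × E} (hz : z ∈ jetBall p m) :
    ‖w z‖ ≤ K * jetNorm z := by
  have h00 : ((p, 0, 0) : E × ℝ × E) ∈ jetBall p m := by
    simpa [jetBall] using (jetNorm_nonneg z).trans hz.2
  obtain ⟨p', s, y⟩ := z
  obtain rfl : p' = p := hz.1
  simpa [h0] using norm_sub_le_of_mem_jetBall hw hK hz h00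

lemma norm_le_mul_jetNorm_sq {w : E × ℝ × E → Y} {p : E} {m K : ℝ} (hK0 : 0 ≤ K)
    (hw : Differentiable ℝ w) (hK : ∀ x ∈ jetBall p m, ‖fderiv ℝ w x‖ ≤ K * jetNorm x)
    (h0 : w (p, 0, 0) = 0) {z : E × ℝ × E} (hz : z ∈ jetBall p m) :
    ‖w z‖ ≤ K * jetNorm z ^ 2 := by
  have hK' : ∀ x ∈ jetBall p (jetNorm z), ‖fderiv ℝ w x‖ ≤ K * jetNorm z := fun x hx =>
    (hK x ⟨hx.1, hx.2.trans hz.2⟩).trans (by gcongr; exact hx.2)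
  simpa [mul_assoc, sq] using norm_le_mul_jetNorm hw hK' h0 ⟨hz.1, le_rfl⟩

lemma fderiv_apply_inl_eq_zero {h : E × ℝ × E → Y} {p : E}
    (hd : DifferentiableAt ℝ h (p, 0, 0)) (h0 : ∀ q, h (q, 0, 0) = 0) (a : E) :
    fderiv ℝ h (p, 0, 0) (a, 0, 0) = 0 := by
  have hcomp := hd.hasFDerivAt.comp p (hasFDerivAt_prodMk_left (𝕜 := ℝ) p ((0 : ℝ), (0 : E)))
  have hconst : (h ∘ fun q : E => (q, ((0 : ℝ), (0 : E)))) = fun _ => 0 := funext h0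
  rw [hconst] at hcomp
  exact congrArg (· a) (hcomp.unique (hasFDerivAt_const 0 p))

lemma fderiv_eq_zero_of_zero_section {f : E × ℝ × E → Y} (hf : Differentiable ℝ f)
    (hf0 : ∀ p, f (p, 0, 0) = 0) (hfs : ∀ p, deriv (fun s : ℝ => f (p, s, 0)) 0 = 0)
    (hfy : ∀ p, fderiv ℝ (fun y : E => f (p, 0, y)) 0 = 0) (p : E) :
    fderiv ℝ f (p, 0, 0) = 0 := by
  have hs : fderiv ℝ f (p, 0, 0) (0, 1, 0) = 0 := by
    have hpath : HasDerivAt (fun s : ℝ => ((p, s, 0) : E × ℝ × E)) (0, 1, 0) 0 :=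
      (hasDerivAt_const _ p).prodMk ((hasDerivAt_id _).prodMk (hasDerivAt_const _ _))
    rw [← hfs p]
    exact (((hf _).hasFDerivAt.comp_hasDerivAt 0 hpath).deriv).symm
  have hy : ∀ c : E, fderiv ℝ f (p, 0, 0) (0, 0, c) = 0 := by
    have hpath : HasFDerivAt (fun y : E => ((p, 0, y) : E × ℝ × E))
        ((ContinuousLinearMap.inr ℝ E (ℝ × E)).comp (ContinuousLinearMap.inr ℝ ℝ E)) 0 :=
      (hasFDerivAt_prodMk_right p _).comp _ (hasFDerivAt_prodMk_right (0 : ℝ) (0 : E))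
    intro c
    simpa [Function.comp_def, hfy p] using
      congrArg (· c) ((hf _).hasFDerivAt.comp (0 : E) hpath).fderiv.symm
  refine ContinuousLinearMap.ext fun ⟨a, b, c⟩ => ?_
  have hsplit : ((a, b, c) : E × ℝ × E) = (a, 0, 0) + b • (0, 1, 0) + (0, 0, c) := by
    simp
  rw [hsplit, map_add, map_add, map_smul, hs, hy, fderiv_apply_inl_eq_zero (hf _) hf0]
  simp

lemma norm_fderiv_fderiv_eq (g : E → Y) (x : E) :
    ‖fderiv ℝ (fderiv ℝ g) x‖ = ‖iteratedFDeriv ℝ 2 g x‖ := by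
  rw [← norm_iteratedFDeriv_one, norm_iteratedFDeriv_fderiv]

section Estimates

variable {f : E × ℝ × E → Y} {Λ : ℝ}

lemma norm_fderiv_le_of_zero_section (hf : ContDiff ℝ 2 f)
    (hF0 : ∀ p, fderiv ℝ f (p, 0, 0) = 0)
    (hD2 : ∀ z, jetNorm z ≤ 1 → ‖iteratedFDeriv ℝ 2 f z‖ ≤ Λ) {z : E × ℝ × E}
    (hz : jetNorm z ≤ 1) : ‖fderiv ℝ f z‖ ≤ Λ * jetNorm z :=
  norm_le_mul_jetNorm ((hf.fderiv_right le_rfl).differentiable one_ne_zero)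
    (fun x hx => norm_fderiv_fderiv_eq f x ▸ hD2 x hx.2) (hF0 z.1) (m := 1) ⟨rfl, hz⟩

lemma norm_le_of_zero_section (hf : ContDiff ℝ 2 f) (hf0 : ∀ p, f (p, 0, 0) = 0)
    (hF0 : ∀ p, fderiv ℝ f (p, 0, 0) = 0)
    (hD2 : ∀ z, jetNorm z ≤ 1 → ‖iteratedFDeriv ℝ 2 f z‖ ≤ Λ) {z : E × ℝ × E}
    (hz : jetNorm z ≤ 1) : ‖f z‖ ≤ Λ * jetNorm z ^ 2 :=
  norm_le_mul_jetNorm_sq ((norm_nonneg _).trans (hD2 0 (by simp [jetNorm])))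
    (hf.differentiable two_ne_zero) (fun x hx => norm_fderiv_le_of_zero_section hf hF0 hD2 hx.2)
    (hf0 z.1) (m := 1) ⟨rfl, hz⟩

lemma norm_fderiv_sub_hessian_le (hf : ContDiff ℝ 3 f)
    (hF0 : ∀ p, fderiv ℝ f (p, 0, 0) = 0)
    (hD3 : ∀ z, jetNorm z ≤ 1 → ‖iteratedFDeriv ℝ 3 f z‖ ≤ Λ) {p : E} {s : ℝ} {y : E}
    (hsy : |s| + ‖y‖ ≤ 1) :
    ‖fderiv ℝ f (p, s, y) - fderiv ℝ (fderiv ℝ f) (p, 0, 0) (0, s, y)‖ ≤ Λ * (|s| + ‖y‖) ^ 2 := by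
  set G := fderiv ℝ (fderiv ℝ f)
  set z₀ : E × ℝ × E := (p, 0, 0)
  have hF : ContDiff ℝ 2 (fderiv ℝ f) := hf.fderiv_right le_rfl
  have hG : Differentiable ℝ G := (hF.fderiv_right le_rfl).differentiable one_ne_zero
  have hΛ : 0 ≤ Λ := (norm_nonneg _).trans (hD3 0 (by simp [jetNorm]))
  have hGz₀ : ∀ x ∈ jetBall p 1, ‖G x - G z₀‖ ≤ Λ * jetNorm x := fun x hx =>
    norm_le_mul_jetNorm (w := fun x => G x - G z₀) (hG.sub_const _) (fun x hx => by
      -- instance search cannot find the norm of a triply iterated `→L[ℝ]`, so `‖D³f‖` is only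
      -- ever reached by rewriting
      have h3 := hD3 x hx.2
      rw [← norm_iteratedFDeriv_fderiv, ← norm_iteratedFDeriv_fderiv, norm_iteratedFDeriv_one] at h3
      rwa [((hG x).hasFDerivAt.sub_const (G z₀)).fderiv]) (sub_self (G z₀)) hx
  have hw : ∀ x, HasFDerivAt (fun x => fderiv ℝ f x - G z₀ (x - z₀)) (G x - G z₀) x := fun x => by
    refine ((hF.differentiable two_ne_zero) x).hasFDerivAt.sub ?_
    exact ((G z₀).hasFDerivAt.comp x ((hasFDerivAt_id x).sub_const z₀)).congr_fderiv
      (ContinuousLinearMap.comp_id _)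
  have := norm_le_mul_jetNorm_sq hΛ (fun x => (hw x).differentiableAt)
    (fun x hx => (hw x).fderiv ▸ hGz₀ x hx) (by simp [z₀, hF0]) (z := (p, s, y)) ⟨rfl, hsy⟩
  simpa [z₀] using this

lemma norm_fderiv_apply_inl_le (hf : ContDiff ℝ 3 f) (hF0 : ∀ p, fderiv ℝ f (p, 0, 0) = 0)
    (hD3 : ∀ z, jetNorm z ≤ 1 → ‖iteratedFDeriv ℝ 3 f z‖ ≤ Λ) {p : E} {s : ℝ} {y : E}
    (hsy : |s| + ‖y‖ ≤ 1) (a : E) :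
    ‖fderiv ℝ f (p, s, y) (a, 0, 0)‖ ≤ Λ * (|s| + ‖y‖) ^ 2 * ‖a‖ := by
  set G₀ := fderiv ℝ (fderiv ℝ f) (p, 0, 0)
  -- by symmetry of `D²f` this is a `p`-derivative of `Df`, which vanishes on the zero section
  have hmixed : G₀ (0, s, y) (a, 0, 0) = 0 := by
    rw [(hf.contDiffAt.isSymmSndFDerivAt (by norm_num)) (0, s, y) (a, 0, 0),
      fderiv_apply_inl_eq_zero ((hf.fderiv_right le_rfl).differentiable two_ne_zero _) hF0]
    rfl
  calc ‖fderiv ℝ f (p, s, y) (a, 0, 0)‖ = ‖(fderiv ℝ f (p, s, y) - G₀ (0, s, y)) (a, 0, 0)‖ := by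
        rw [sub_apply, hmixed, sub_zero]
    _ ≤ ‖fderiv ℝ f (p, s, y) - G₀ (0, s, y)‖ * ‖((a, 0, 0) : E × ℝ × E)‖ :=
        ContinuousLinearMap.le_opNorm _ _
    _ ≤ Λ * (|s| + ‖y‖) ^ 2 * ‖a‖ := by
        rw [show ‖((a, 0, 0) : E × ℝ × E)‖ = ‖a‖ by simp [Prod.norm_def]]
        gcongr
        exact norm_fderiv_sub_hessian_le hf hF0 hD3 hsy

lemma norm_sub_fst_le_of_zero_section (hf : ContDiff ℝ 3 f)
    (hF0 : ∀ p, fderiv ℝ f (p, 0, 0) = 0)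
    (hD3 : ∀ z, jetNorm z ≤ 1 → ‖iteratedFDeriv ℝ 3 f z‖ ≤ Λ) {s : ℝ} {y : E}
    (hsy : |s| + ‖y‖ ≤ 1) (p q : E) :
    ‖f (p, s, y) - f (q, s, y)‖ ≤ Λ * (|s| + ‖y‖) ^ 2 * ‖p - q‖ := by
  have hderiv : ∀ r : E, HasFDerivAt (fun r => f (r, s, y))
      ((fderiv ℝ f (r, s, y)).comp (ContinuousLinearMap.inl ℝ E (ℝ × E))) r := fun r =>
    ((hf.differentiable (by norm_num)) _).hasFDerivAt.comp r (hasFDerivAt_prodMk_left r (s, y))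
  have hΛ : 0 ≤ Λ := (norm_nonneg _).trans (hD3 0 (by simp [jetNorm]))
  refine convex_univ.norm_image_sub_le_of_norm_hasFDerivWithin_le
    (fun r _ => (hderiv r).hasFDerivWithinAt) (fun r _ => ?_) (mem_univ q) (mem_univ p)
  exact ContinuousLinearMap.opNorm_le_bound _ (by positivity)
    (norm_fderiv_apply_inl_le hf hF0 hD3 hsy)

lemma norm_sub_snd_le_of_zero_section (hf : ContDiff ℝ 2 f)
    (hF0 : ∀ p, fderiv ℝ f (p, 0, 0) = 0)
    (hD2 : ∀ z, jetNorm z ≤ 1 → ‖iteratedFDeriv ℝ 2 f z‖ ≤ Λ) {q : E} {m : ℝ} (hm : m ≤ 1)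
    {z z' : E × ℝ × E} (hz : z ∈ jetBall q m) (hz' : z' ∈ jetBall q m) :
    ‖f z - f z'‖ ≤ Λ * m * jetNorm (z - z') := by
  have hΛ : 0 ≤ Λ := (norm_nonneg _).trans (hD2 0 (by simp [jetNorm]))
  refine norm_sub_le_of_mem_jetBall (hf.differentiable two_ne_zero) (fun x hx => ?_) hz hz'
  calc ‖fderiv ℝ f x‖ ≤ Λ * jetNorm x := norm_fderiv_le_of_zero_section hf hF0 hD2 (hx.2.trans hm)
    _ ≤ Λ * m := by gcongr; exact hx.2

lemma norm_sub_le_of_zero_section (hf : ContDiff ℝ 3 f) (hF0 : ∀ p, fderiv ℝ f (p, 0, 0) = 0)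
    (hD2 : ∀ z, jetNorm z ≤ 1 → ‖iteratedFDeriv ℝ 2 f z‖ ≤ Λ)
    (hD3 : ∀ z, jetNorm z ≤ 1 → ‖iteratedFDeriv ℝ 3 f z‖ ≤ Λ) {M : ℝ} (hM1 : M ≤ 1)
    {p q : E} {s s' : ℝ} {y y' : E} (hsy : |s| + ‖y‖ ≤ M) (hsy' : |s'| + ‖y'‖ ≤ M) :
    ‖f (p, s, y) - f (q, s', y')‖ ≤ Λ * M ^ 2 * ‖p - q‖ + Λ * M * (|s - s'| + ‖y - y'‖) := by
  have hΛ : 0 ≤ Λ := (norm_nonneg _).trans (hD2 0 (by simp [jetNorm]))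
  have hfst : ‖f (p, s, y) - f (q, s, y)‖ ≤ Λ * M ^ 2 * ‖p - q‖ :=
    (norm_sub_fst_le_of_zero_section hf hF0 hD3 (hsy.trans hM1) p q).trans (by gcongr)
  have hsnd : ‖f (q, s, y) - f (q, s', y')‖ ≤ Λ * M * (|s - s'| + ‖y - y'‖) := by
    simpa using norm_sub_snd_le_of_zero_section (hf.of_le (by norm_num)) hF0 hD2 hM1
      (z := (q, s, y)) (z' := (q, s', y')) ⟨rfl, hsy⟩ ⟨rfl, hsy'⟩
  exact (norm_sub_le_norm_sub_add_norm_sub _ _ _).trans (add_le_add hfst hsnd)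

end Estimates

theorem holder_estimate_of_zero_section {f : E × ℝ × E → Y} {α Λ M H : ℝ}
    (hα₀ : 0 ≤ α) (hα₁ : α ≤ 1) (hf : ContDiff ℝ 3 f) (hf0 : ∀ p, f (p, 0, 0) = 0)
    (hF0 : ∀ p, fderiv ℝ f (p, 0, 0) = 0)
    (hD2 : ∀ z, jetNorm z ≤ 1 → ‖iteratedFDeriv ℝ 2 f z‖ ≤ Λ)
    (hD3 : ∀ z, jetNorm z ≤ 1 → ‖iteratedFDeriv ℝ 3 f z‖ ≤ Λ)
    {v : E → ℝ} {w : E → E} (hH : 0 ≤ H) (hM : ∀ p, |v p| + ‖w p‖ ≤ M) (hM1 : M ≤ 1)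
    (hv : ∀ p q, |v p - v q| ≤ M * dist p q) (hw : ∀ p q, ‖w p - w q‖ ≤ H * dist p q ^ α) :
    (∀ p, ‖f (p, v p, w p)‖ ≤ 2 * Λ * M * (M + H)) ∧
      ∀ p q, ‖f (p, v p, w p) - f (q, v q, w q)‖ ≤ 2 * Λ * M * (M + H) * dist p q ^ α := by
  have hΛ : 0 ≤ Λ := (norm_nonneg _).trans (hD2 0 (by simp [jetNorm]))
  have hM0 : 0 ≤ M := (by positivity : (0 : ℝ) ≤ |v 0| + ‖w 0‖).trans (hM 0)
  have hsup : ∀ p, ‖f (p, v p, w p)‖ ≤ Λ * M ^ 2 := fun p =>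
    (norm_le_of_zero_section (hf.of_le (by norm_num)) hf0 hF0 hD2 (z := (p, v p, w p))
      ((hM p).trans hM1)).trans (by gcongr; exacts [jetNorm_nonneg _, hM p])
  have hloc : ∀ p q, dist p q < 1 →
      ‖f (p, v p, w p) - f (q, v q, w q)‖ ≤ 2 * Λ * M * (M + H) * dist p q ^ α := by
    intro p q hpq
    have hd : dist p q ≤ dist p q ^ α := Real.self_le_rpow_of_le_one dist_nonneg hpq.le hα₁
    have hdα : 0 ≤ dist p q ^ α := Real.rpow_nonneg dist_nonneg α
    have hvq : |v p - v q| ≤ M * dist p q ^ α := (hv p q).trans (by gcongr)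
    calc _ ≤ Λ * M ^ 2 * dist p q + Λ * M * (|v p - v q| + ‖w p - w q‖) := by
          simpa only [dist_eq_norm] using
            norm_sub_le_of_zero_section hf hF0 hD2 hD3 hM1 (hM p) (hM q)
      _ ≤ Λ * M ^ 2 * dist p q ^ α + Λ * M * (M * dist p q ^ α + H * dist p q ^ α) := by
          gcongr
          exact hw p q
      _ ≤ 2 * Λ * M * (M + H) * dist p q ^ α := by
          nlinarith [mul_nonneg (mul_nonneg (mul_nonneg hΛ hM0) hH) hdα]
  refine ⟨fun p => (hsup p).trans ?_,
    norm_sub_le_mul_rpow_of_dist_lt_one hα₀ hsup ?_ hloc⟩ <;>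
    nlinarith [mul_nonneg (mul_nonneg hΛ hM0) hH]

end Jets

theorem quadratic_holder_estimate_general (n : ℕ) (α : ℝ)
    (hα : α ∈ Set.Ioo (0 : ℝ) 1) (Λ : ℝ) (hΛ : 0 < Λ)
    (f : EuclideanSpace ℝ (Fin n) × ℝ × EuclideanSpace ℝ (Fin n) → ℝ)
    (hf : ContDiff ℝ 3 f)
    (hfb : ∀ i : ℕ, i ≤ 3 →
      ∀ (p : EuclideanSpace ℝ (Fin n)) (s : ℝ) (y : EuclideanSpace ℝ (Fin n)),
        |s| + ‖y‖ ≤ 1 → ‖iteratedFDeriv ℝ i f (p, s, y)‖ ≤ Λ)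
    (hf0 : ∀ p : EuclideanSpace ℝ (Fin n), f (p, 0, 0) = 0)
    (hfs : ∀ p : EuclideanSpace ℝ (Fin n), deriv (fun s : ℝ => f (p, s, 0)) 0 = 0)
    (hfy : ∀ p : EuclideanSpace ℝ (Fin n),
      fderiv ℝ (fun y : EuclideanSpace ℝ (Fin n) => f (p, 0, y)) 0 = 0) :
    ∃ C > 0, ∀ v : EuclideanSpace ℝ (Fin n) → ℝ, ContDiff ℝ 1 v →
      ∀ M H : ℝ, 0 ≤ H → (∀ p, |v p| + ‖gradient v p‖ ≤ M) → M ≤ 1 →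
      (∀ p q, ‖gradient v p - gradient v q‖ ≤ H * dist p q ^ α) →
      (∀ p, |f (p, v p, gradient v p)| ≤ C * M * (M + H)) ∧
      (∀ p q, |f (p, v p, gradient v p) - f (q, v q, gradient v q)| ≤
        C * M * (M + H) * dist p q ^ α) := by
  have hF0 := fderiv_eq_zero_of_zero_section (hf.differentiable (by norm_num)) hf0 hfs hfy
  have hD : ∀ i ≤ 3, ∀ z, jetNorm z ≤ 1 → ‖iteratedFDeriv ℝ i f z‖ ≤ Λ :=
    fun i hi ⟨p, s, y⟩ hz => hfb i hi p s y hz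
  refine ⟨2 * Λ, by positivity, fun v hv M H hH hM hM1 hw => ?_⟩
  have hv' := abs_sub_le_mul_dist_of_norm_gradient_le (hv.differentiable one_ne_zero)
    (fun p => (le_add_of_nonneg_left (abs_nonneg _)).trans (hM p))
  simpa only [Real.norm_eq_abs] using holder_estimate_of_zero_section hα.1.le hα.2.le hf hf0 hF0
    (hD 2 (by norm_num)) (hD 3 le_rfl) hH hM hM1 hv' hw

/-- Lemma B.2 (Euclidean version): if `f(p,s,y)` is `C³` with derivatives up to order 3
bounded by `Λ` on `{|s| + |y| ≤ 1}` and `f`, `∂_s f`, `∇_y f` vanish along the zero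
section, then for `C¹` functions `v` with `‖v‖_{C¹} ≤ M ≤ 1` and `[∇v]_α ≤ H`, the
composition `g(p) = f(p, v(p), ∇v(p))` satisfies `‖g‖_{C^α} ≤ C M (M + H)`. -/
theorem quadratic_holder_estimate (n : ℕ) (hn : 1 ≤ n) (α : ℝ)
    (hα : α ∈ Set.Ioo (0 : ℝ) 1) (Λ : ℝ) (hΛ : 0 < Λ)
    (f : EuclideanSpace ℝ (Fin n) × ℝ × EuclideanSpace ℝ (Fin n) → ℝ)
    (hf : ContDiff ℝ 3 f)
    (hfb : ∀ i : ℕ, i ≤ 3 →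
      ∀ (p : EuclideanSpace ℝ (Fin n)) (s : ℝ) (y : EuclideanSpace ℝ (Fin n)),
        |s| + ‖y‖ ≤ 1 → ‖iteratedFDeriv ℝ i f (p, s, y)‖ ≤ Λ)
    (hf0 : ∀ p : EuclideanSpace ℝ (Fin n), f (p, 0, 0) = 0)
    (hfs : ∀ p : EuclideanSpace ℝ (Fin n), deriv (fun s : ℝ => f (p, s, 0)) 0 = 0)
    (hfy : ∀ p : EuclideanSpace ℝ (Fin n),
      fderiv ℝ (fun y : EuclideanSpace ℝ (Fin n) => f (p, 0, y)) 0 = 0) :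
    ∃ C > 0, ∀ v : EuclideanSpace ℝ (Fin n) → ℝ, ContDiff ℝ 1 v →
      ∀ M H : ℝ, 0 ≤ H → (∀ p, |v p| + ‖gradient v p‖ ≤ M) → M ≤ 1 →
      (∀ p q, ‖gradient v p - gradient v q‖ ≤ H * dist p q ^ α) →
      (∀ p, |f (p, v p, gradient v p)| ≤ C * M * (M + H)) ∧
      (∀ p q, |f (p, v p, gradient v p) - f (q, v q, gradient v q)| ≤
        C * M * (M + H) * dist p q ^ α) :=
  quadratic_holder_estimate_general n α hα Λ hΛ f hf hfb hf0 hfs hfy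
end
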